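/- arXiv:2302.10814 — 4 statements merged into one kernel-verified Lean document; each statement's English description precedes it below -/
import Mathlib

section
/- Let n ≥ 0. A noncrossing partition of size n is uniquely determined by its sets of left and right endpoints: if λ and μ are noncrossing partitions of size n with λ⁺ = μ⁺ and λ⁻ = μ⁻, then λ = μ. Moreover, given two subsets L, R ⊆ {1,…,n} with |L| = |R|, the inequalities |{1,…,k−1} ∩ L| ≥ |{1,…,k} ∩ R| hold for all k ≥ 1 if and only if there exists a noncrossing partition λ of size n with L = λ⁺ and R = λ⁻. -/
open scoped Classical

noncomputable section

/-- `IsNCP n A` : `A` is the arc set of a noncrossing partition of size `n`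
(arcs `(i,j)` with `i < j`; no two distinct arcs `(i,k)`, `(j,l)` with `i ≤ j < k ≤ l`,
i.e. no crossings and no shared endpoints). -/
def IsNCP (n : ℕ) (A : Finset (Fin n × Fin n)) : Prop :=
  (∀ p ∈ A, p.1 < p.2) ∧
    ∀ p ∈ A, ∀ q ∈ A, p ≠ q → ¬(p.1 ≤ q.1 ∧ q.1 < p.2 ∧ p.2 ≤ q.2)

/-- Noncrossing partitions of size `n` (labelled `1, …, n`, realized as `Fin n`). -/
def NCP (n : ℕ) : Type := {A : Finset (Fin n × Fin n) // IsNCP n A}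

noncomputable instance (n : ℕ) : Fintype (NCP n) := by
  unfold NCP; infer_instance

namespace NCP

variable {n : ℕ}

/-- The set `λ⁺` of left endpoints of arcs. -/
def lpos (lam : NCP n) : Finset (Fin n) := lam.1.image Prod.fst

/-- The set `λ⁻` of right endpoints of arcs. -/
def rpos (lam : NCP n) : Finset (Fin n) := lam.1.image Prod.snd

/-- `a` and `b` lie in the same connected component of `λ` viewed as a graph. -/
def Connected (lam : NCP n) (a b : Fin n) : Prop :=
  Relation.ReflTransGen (fun x y => (x, y) ∈ lam.1 ∨ (y, x) ∈ lam.1) a b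

/-- The connected component of `j` in `λ`. -/
def component (lam : NCP n) (j : Fin n) : Finset (Fin n) :=
  Finset.univ.filter fun i => Connected lam j i

theorem mem_component_self (lam : NCP n) (j : Fin n) : j ∈ component lam j :=
  Finset.mem_filter.mpr ⟨Finset.mem_univ j, Relation.ReflTransGen.refl⟩

/-- The largest element of the connected component of `j` in `λ`. -/
def compMax (lam : NCP n) (j : Fin n) : Fin n :=
  (component lam j).max' ⟨j, mem_component_self lam j⟩

/-- The function underlying the permutation `Q_λ` : `j ↦ i` if `(i,j)` is an arc of `λ`,
and `j ↦` the largest element of the connected component of `j` otherwise. -/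
def Qfun (lam : NCP n) (j : Fin n) : Fin n :=
  if h : ∃ i, (i, j) ∈ lam.1 then h.choose else compMax lam j

/-- `Q` is the permutation `Q_λ`. -/
def IsQ (lam : NCP n) (Q : Equiv.Perm (Fin n)) : Prop :=
  ∀ j, Q j = Qfun lam j

/-- `T` is the permutation `T_λ` : the bijection mapping `λ⁻` onto `λ⁺` in an
order-preserving way and the complement of `λ⁻` onto the complement of `λ⁺` in an
order-preserving way. -/
def IsT (lam : NCP n) (T : Equiv.Perm (Fin n)) : Prop :=
  (∀ j, j ∈ rpos lam ↔ T j ∈ lpos lam) ∧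
  (∀ j j', j ∈ rpos lam → j' ∈ rpos lam → j < j' → T j < T j') ∧
  (∀ j j', j ∉ rpos lam → j' ∉ rpos lam → j < j' → T j < T j')

end NCP

/-- Weak excedance positions `E_pos(w) = {i : i ≤ w(i)}`. -/
def ExcPos {n : ℕ} (w : Equiv.Perm (Fin n)) : Finset (Fin n) :=
  Finset.univ.filter fun i => i ≤ w i

/-- Weak excedance values `E_val(w) = {w(i) : i ≤ w(i)}`. -/
def ExcVal {n : ℕ} (w : Equiv.Perm (Fin n)) : Finset (Fin n) :=
  (ExcPos w).image w

/-- The excedance relation `∼`. -/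
def ExcEq {n : ℕ} (v w : Equiv.Perm (Fin n)) : Prop :=
  ExcVal v = ExcVal w ∧ ExcPos v = ExcPos w

/-- The excedance relation as a setoid on `S_n`. -/
def excSetoid (n : ℕ) : Setoid (Equiv.Perm (Fin n)) where
  r := ExcEq
  iseqv := ⟨fun _ => ⟨rfl, rfl⟩, fun h => ⟨h.1.symm, h.2.symm⟩,
    fun h h' => ⟨h.1.trans h'.1, h.2.trans h'.2⟩⟩

namespace NCP

/-- The excedance class `C_λ`. -/
def Cset {n : ℕ} (lam : NCP n) : Set (Equiv.Perm (Fin n)) :=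
  {w | ExcVal w = Finset.univ \ lpos lam ∧ ExcPos w = Finset.univ \ rpos lam}

end NCP

/-- Number of inversions of a permutation. -/
def bruhatLen {n : ℕ} (w : Equiv.Perm (Fin n)) : ℕ :=
  (Finset.univ.filter fun p : Fin n × Fin n => p.1 < p.2 ∧ w p.2 < w p.1).card

/-- The Bruhat order on `S_n` : generated by `v < w` whenever `w v⁻¹` is a
transposition and `ℓ(v) < ℓ(w)`. -/
def BruhatLE {n : ℕ} (v w : Equiv.Perm (Fin n)) : Prop :=
  Relation.ReflTransGen (fun a b => (b * a⁻¹).IsSwap ∧ bruhatLen a < bruhatLen b) v w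

/-- Strict Bruhat order. -/
def BruhatLT {n : ℕ} (v w : Equiv.Perm (Fin n)) : Prop :=
  BruhatLE v w ∧ v ≠ w

/-- `λ` is covered by `μ` : `λ` is obtained from `μ` by removing an arc `(i, i+1)`,
or by replacing an arc `(i,k)` by two arcs `(i,j)`, `(j,k)` with `i < j < k`
(validity of the result is enforced by `λ` being a noncrossing partition). -/
def NCPCovBy {n : ℕ} (lam mu : NCP n) : Prop :=
  (∃ i j : Fin n, (j : ℕ) = (i : ℕ) + 1 ∧ (i, j) ∈ mu.1 ∧ lam.1 = mu.1.erase (i, j)) ∨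
  (∃ i j k : Fin n, i < j ∧ j < k ∧ (i, k) ∈ mu.1 ∧
      lam.1 = insert (i, j) (insert (j, k) (mu.1.erase (i, k))))

/-- The partial order `⪯` on noncrossing partitions generated by the covering relation. -/
def NCPle {n : ℕ} (lam mu : NCP n) : Prop :=
  Relation.ReflTransGen (fun a b => NCPCovBy a b) lam mu

/-- The defining relations of the Temperley–Lieb algebra `TL_n(2)`. -/
inductive TLRel (n : ℕ) : FreeAlgebra ℂ (Fin (n - 1)) → FreeAlgebra ℂ (Fin (n - 1)) → Prop
  | sq (i : Fin (n - 1)) :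
      TLRel n (FreeAlgebra.ι ℂ i * FreeAlgebra.ι ℂ i) (2 * FreeAlgebra.ι ℂ i)
  | far (i j : Fin (n - 1)) (h : (i : ℕ) + 1 < (j : ℕ) ∨ (j : ℕ) + 1 < (i : ℕ)) :
      TLRel n (FreeAlgebra.ι ℂ i * FreeAlgebra.ι ℂ j) (FreeAlgebra.ι ℂ j * FreeAlgebra.ι ℂ i)
  | near (i j : Fin (n - 1)) (h : (i : ℕ) + 1 = (j : ℕ) ∨ (j : ℕ) + 1 = (i : ℕ)) :
      TLRel n (FreeAlgebra.ι ℂ i * FreeAlgebra.ι ℂ j * FreeAlgebra.ι ℂ i) (FreeAlgebra.ι ℂ i)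

/-- The Temperley–Lieb algebra `TL_n(2)`. -/
abbrev TL (n : ℕ) := RingQuot (TLRel n)

/-- The generator `e_i` of `TL_n(2)`. -/
def TLgen (n : ℕ) (i : Fin (n - 1)) : TL n :=
  RingQuot.mkAlgHom ℂ (TLRel n) (FreeAlgebra.ι ℂ i)

/-- The simple transposition `s_i = (i, i+1)` in `S_n`. -/
def simpleTransposition (n : ℕ) (i : Fin (n - 1)) : Equiv.Perm (Fin n) :=
  Equiv.swap ⟨i.val, lt_of_lt_of_le i.isLt (Nat.sub_le n 1)⟩
    ⟨i.val + 1, by have h := i.isLt; omega⟩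

open MvPolynomial

/-- The monomial quasisymmetric polynomial `M_α` in `n` variables,
for a composition `α = (α 0, …, α (k-1))`. -/
noncomputable def Mpoly (n k : ℕ) (α : Fin k → ℕ) : MvPolynomial (Fin n) ℚ :=
  ∑ c ∈ Finset.univ.filter (fun c : Fin k → Fin n => StrictMono c),
    ∏ s : Fin k, X (c s) ^ α s

/-- The vanishing polynomial `P_α`.  The sum over pairs (a coarsening `β ⪰ α` with
blocks witnessed by `1 = f_1 < ⋯ < f_{ℓ+1} = k+1`, and indices `i_1 < ⋯ < i_ℓ`)
is re-indexed by monotone maps `c : Fin k → Fin n`: the fibers of `c` are the blocks of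
the coarsening, and `c` sends the `j`-th block to `i_j`.  The variable with 1-based label
`i` is `x_i`, so the rational constant attached to `c s : Fin n` is `(c s : ℕ) + 1`. -/
noncomputable def Ppoly (n k : ℕ) (α : Fin k → ℕ) : MvPolynomial (Fin n) ℚ :=
  ∑ c ∈ Finset.univ.filter (fun c : Fin k → Fin n => Monotone c),
    ∏ s : Fin k,
      if ∀ t, t < s → c t < c s then
        X (c s) ^ α s - C ((((c s : ℕ) : ℚ) + 1) ^ α s)
      else C ((-(((c s : ℕ) : ℚ) + 1)) ^ α s)

/-- The top-degree homogeneous component `h(f)`. -/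
noncomputable def topHom {n : ℕ} (f : MvPolynomial (Fin n) ℚ) : MvPolynomial (Fin n) ℚ :=
  MvPolynomial.homogeneousComponent f.totalDegree f

/-- The set `QSV_n ⊆ S_n`. -/
def QSVset (n : ℕ) : Set (Equiv.Perm (Fin n)) := {σ | ∃ lam : NCP n, NCP.IsQ lam σ}

/-- The point `(σ(1), …, σ(n)) ∈ ℚⁿ` associated to a permutation (1-based labels). -/
def permPoint {n : ℕ} (σ : Equiv.Perm (Fin n)) : Fin n → ℚ := fun i => ((σ i : ℕ) : ℚ) + 1

/-- `QSV_n` as a set of points in `ℚⁿ`. -/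
def QSVpoints (n : ℕ) : Set (Fin n → ℚ) := {p | ∃ σ ∈ QSVset n, p = permPoint σ}

/-- The vanishing ideal of a set of points in `ℚⁿ`. -/
noncomputable def vanishingIdeal (n : ℕ) (S : Set (Fin n → ℚ)) :
    Ideal (MvPolynomial (Fin n) ℚ) where
  carrier := {f | ∀ p ∈ S, MvPolynomial.eval p f = 0}
  add_mem' := by
    intro a b ha hb p hp
    simp [map_add, ha p hp, hb p hp]
  zero_mem' := by
    intro p hp
    simp
  smul_mem' := by
    intro c f hf p hp
    simp [smul_eq_mul, map_mul, hf p hp]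

/-- The monomial quasisymmetric polynomials `M_α` for nonempty compositions `α`
with `ℓ(α) ≤ n`. -/
def MpolySet (n : ℕ) : Set (MvPolynomial (Fin n) ℚ) :=
  {f | ∃ k, ∃ α : Fin k → ℕ, 0 < k ∧ k ≤ n ∧ (∀ s, 0 < α s) ∧ f = Mpoly n k α}

/-- The vanishing polynomials `P_α` for nonempty compositions `α` with `ℓ(α) ≤ n`. -/
def PpolySet (n : ℕ) : Set (MvPolynomial (Fin n) ℚ) :=
  {f | ∃ k, ∃ α : Fin k → ℕ, 0 < k ∧ k ≤ n ∧ (∀ s, 0 < α s) ∧ f = Ppoly n k α}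

/-- The space `QSym_n` of quasisymmetric polynomials : the span of `1` and the `M_α`. -/
def QSym (n : ℕ) : Submodule ℚ (MvPolynomial (Fin n) ℚ) :=
  Submodule.span ℚ (insert 1 (MpolySet n))

/-- `QSym_n⁺` : quasisymmetric polynomials with zero constant term. -/
def QSymPlus (n : ℕ) : Set (MvPolynomial (Fin n) ℚ) :=
  {f | f ∈ QSym n ∧ MvPolynomial.constantCoeff f = 0}

/-- `gr(I) = ⟨h(f) : f ∈ I⟩`. -/
noncomputable def grIdeal (n : ℕ) (I : Ideal (MvPolynomial (Fin n) ℚ)) :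
    Ideal (MvPolynomial (Fin n) ℚ) :=
  Ideal.span (topHom '' (I : Set (MvPolynomial (Fin n) ℚ)))
/-! The arc ending at the first right endpoint `j` must start at the last left endpoint before
`j`: the arc of any left endpoint strictly between them would cross or nest over it. So this
arc is determined by `λ⁺` and `λ⁻`, and removing it gives uniqueness by induction. Conversely,
the ballot inequality at `k = j + 1` provides a left endpoint before `j`, so the same arc can be
added greedily, which gives existence. -/

theorem Finset.image_erase_of_injOn {α β : Type*} [DecidableEq α] [DecidableEq β] {f : α → β}
    {s : Finset α} {a : α} (hf : Set.InjOn f s) (ha : a ∈ s) :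
    (s.erase a).image f = (s.image f).erase (f a) := by
  ext b
  simp only [Finset.mem_image, Finset.mem_erase]
  constructor
  · rintro ⟨x, ⟨hxa, hx⟩, rfl⟩
    exact ⟨fun h => hxa (hf hx ha h), x, hx, rfl⟩
  · rintro ⟨hb, x, hx, rfl⟩
    exact ⟨x, ⟨fun h => hb (h ▸ rfl), hx⟩, rfl⟩

-- `i : Fin n` carries the label `i + 1`, so this reads `|{1,…,k-1} ∩ L| ≥ |{1,…,k} ∩ R|`.
def IsBallot {n : ℕ} (L R : Finset (Fin n)) : Prop :=
  ∀ k : ℕ, 1 ≤ k →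
    (R.filter (fun i : Fin n => (i : ℕ) < k)).card ≤
      (L.filter (fun i : Fin n => (i : ℕ) + 1 < k)).card

namespace IsNCP

variable {n : ℕ} {A : Finset (Fin n × Fin n)}

theorem injOn_fst (h : IsNCP n A) : Set.InjOn Prod.fst (A : Set (Fin n × Fin n)) := by
  rintro ⟨i, j⟩ hp ⟨i', j'⟩ hq (rfl : i = i')
  rcases lt_trichotomy j j' with hlt | rfl | hlt
  · exact (h.2 _ hp _ hq (by simp [hlt.ne]) ⟨le_rfl, h.1 _ hp, hlt.le⟩).elim
  · rfl
  · exact (h.2 _ hq _ hp (by simp [hlt.ne]) ⟨le_rfl, h.1 _ hq, hlt.le⟩).elim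

theorem injOn_snd (h : IsNCP n A) : Set.InjOn Prod.snd (A : Set (Fin n × Fin n)) := by
  rintro ⟨i, j⟩ hp ⟨i', j'⟩ hq (rfl : j = j')
  rcases lt_trichotomy i i' with hlt | rfl | hlt
  · exact (h.2 _ hp _ hq (by simp [hlt.ne]) ⟨hlt.le, h.1 _ hq, le_rfl⟩).elim
  · rfl
  · exact (h.2 _ hq _ hp (by simp [hlt.ne]) ⟨hlt.le, h.1 _ hp, le_rfl⟩).elim

theorem erase (h : IsNCP n A) (p : Fin n × Fin n) : IsNCP n (A.erase p) :=
  ⟨fun q hq => h.1 q (Finset.mem_of_mem_erase hq),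
    fun q hq r hr => h.2 q (Finset.mem_of_mem_erase hq) r (Finset.mem_of_mem_erase hr)⟩

theorem insert (h : IsNCP n A) {i j : Fin n} (hij : i < j)
    (hleft : ∀ q ∈ A, q.1 < j → q.1 < i) (hright : ∀ q ∈ A, j < q.2) :
    IsNCP n (insert (i, j) A) := by
  refine ⟨?_, ?_⟩
  · simp only [Finset.forall_mem_insert]
    exact ⟨hij, h.1⟩
  · rintro p hp q hq hpq ⟨h1, h2, h3⟩
    rcases Finset.mem_insert.mp hp with rfl | hp <;> rcases Finset.mem_insert.mp hq with rfl | hq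
    · exact hpq rfl
    · exact not_le.mpr (hleft q hq h2) h1
    · exact not_le.mpr (hright p hp) h3
    · exact h.2 p hp q hq hpq ⟨h1, h2, h3⟩

theorem isBallot_image (h : IsNCP n A) : IsBallot (A.image Prod.fst) (A.image Prod.snd) := by
  intro k _
  rw [Finset.filter_image, Finset.filter_image,
    Finset.card_image_of_injOn (h.injOn_snd.mono (Finset.coe_subset.mpr (Finset.filter_subset _ _))),
    Finset.card_image_of_injOn (h.injOn_fst.mono (Finset.coe_subset.mpr (Finset.filter_subset _ _)))]
  refine Finset.card_le_card (Finset.monotone_filter_right _ fun p hp hpk => ?_)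
  have := h.1 p hp
  omega

theorem fst_le_of_forall_le_snd (h : IsNCP n A) {i j a : Fin n} (hij : (i, j) ∈ A)
    (hmin : ∀ q ∈ A, j ≤ q.2) (ha : a ∈ A.image Prod.fst) (haj : a < j) : a ≤ i := by
  obtain ⟨q, hq, rfl⟩ := Finset.mem_image.mp ha
  by_contra! hiq
  exact h.2 _ hij q hq (fun hq' => hiq.ne (congrArg Prod.fst hq')) ⟨hiq.le, haj, hmin q hq⟩

theorem eq_of_image_eq {B : Finset (Fin n × Fin n)} (hA : IsNCP n A) (hB : IsNCP n B)
    (hL : A.image Prod.fst = B.image Prod.fst) (hR : A.image Prod.snd = B.image Prod.snd) :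
    A = B := by
  obtain ⟨m, hm⟩ : ∃ m, A.card = m := ⟨_, rfl⟩
  induction m generalizing A B with
  | zero =>
    obtain rfl := Finset.card_eq_zero.mp hm
    simpa [eq_comm] using hR
  | succ m ih =>
    obtain ⟨⟨i, j⟩, hiA, hjminA⟩ := A.exists_min_image Prod.snd (Finset.card_pos.mp (by omega))
    have hjminB : ∀ q ∈ B, j ≤ q.2 := fun q hq => by
      obtain ⟨q', hq', hq'q⟩ := Finset.mem_image.mp (hR ▸ Finset.mem_image_of_mem Prod.snd hq)
      exact hq'q ▸ hjminA q' hq'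
    obtain ⟨⟨i', j'⟩, hi'B, hj'⟩ := Finset.mem_image.mp (hR ▸ Finset.mem_image_of_mem Prod.snd hiA)
    replace hj' : j = j' := hj'.symm
    subst hj'
    obtain rfl : i = i' := le_antisymm
      (hB.fst_le_of_forall_le_snd hi'B hjminB (hL ▸ Finset.mem_image_of_mem _ hiA) (hA.1 _ hiA))
      (hA.fst_le_of_forall_le_snd hiA hjminA (hL ▸ Finset.mem_image_of_mem _ hi'B) (hB.1 _ hi'B))
    have herase : A.erase (i, j) = B.erase (i, j) := by
      refine ih (hA.erase _) (hB.erase _) ?_ ?_ (by rw [Finset.card_erase_of_mem hiA, hm]; rfl)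
      · rw [Finset.image_erase_of_injOn hA.injOn_fst hiA,
          Finset.image_erase_of_injOn hB.injOn_fst hi'B, hL]
      · rw [Finset.image_erase_of_injOn hA.injOn_snd hiA,
          Finset.image_erase_of_injOn hB.injOn_snd hi'B, hR]
    rw [← Finset.insert_erase hiA, ← Finset.insert_erase hi'B, herase]

end IsNCP

namespace IsBallot

variable {n : ℕ} {L R : Finset (Fin n)}

theorem exists_lt (h : IsBallot L R) {j : Fin n} (hj : j ∈ R) : ∃ i ∈ L, i < j := by
  have hpos : 0 < (L.filter (fun i : Fin n => (i : ℕ) + 1 < (j : ℕ) + 1)).card :=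
    (Finset.card_pos.mpr ⟨j, Finset.mem_filter.mpr ⟨hj, by omega⟩⟩).trans_le (h _ (by omega))
  obtain ⟨i, hi⟩ := Finset.card_pos.mp hpos
  obtain ⟨hiL, hij⟩ := Finset.mem_filter.mp hi
  exact ⟨i, hiL, Fin.lt_def.mpr (by omega)⟩

theorem erase (h : IsBallot L R) {i j : Fin n} (hi : i ∈ L) (hj : j ∈ R) (hij : i < j)
    (hjmin : ∀ r ∈ R, j ≤ r) : IsBallot (L.erase i) (R.erase j) := by
  intro k hk
  by_cases hjk : (j : ℕ) < k
  · have hik : (i : ℕ) + 1 < k := by have := Fin.lt_def.mp hij; omega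
    rw [Finset.filter_erase, Finset.filter_erase,
      Finset.card_erase_of_mem (Finset.mem_filter.mpr ⟨hj, hjk⟩),
      Finset.card_erase_of_mem (Finset.mem_filter.mpr ⟨hi, hik⟩)]
    exact Nat.sub_le_sub_right (h k hk) 1
  · have hempty : (R.erase j).filter (fun r : Fin n => (r : ℕ) < k) = ∅ :=
      Finset.filter_eq_empty_iff.mpr fun r hr hrk =>
        hjk ((Fin.le_def.mp (hjmin r (Finset.mem_of_mem_erase hr))).trans_lt hrk)
    simp [hempty]

theorem exists_isNCP (h : IsBallot L R) (hcard : L.card = R.card) :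
    ∃ A, IsNCP n A ∧ A.image Prod.fst = L ∧ A.image Prod.snd = R := by
  obtain ⟨m, hm⟩ : ∃ m, R.card = m := ⟨_, rfl⟩
  induction m generalizing L R with
  | zero =>
    obtain rfl := Finset.card_eq_zero.mp hm
    obtain rfl := Finset.card_eq_zero.mp (hcard.trans hm)
    exact ⟨∅, ⟨by simp, by simp⟩, by simp, by simp⟩
  | succ m ih =>
    obtain ⟨j, hjR, hjmin⟩ := R.exists_min_image id (Finset.card_pos.mp (by omega))
    obtain ⟨i₀, hi₀L, hi₀j⟩ := h.exists_lt hjR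
    obtain ⟨i, hi, himax⟩ := (L.filter (· < j)).exists_max_image id
      ⟨i₀, Finset.mem_filter.mpr ⟨hi₀L, hi₀j⟩⟩
    obtain ⟨hiL, hij⟩ := Finset.mem_filter.mp hi
    obtain ⟨A, hA, hAL, hAR⟩ := ih (h.erase hiL hjR hij hjmin)
      (by rw [Finset.card_erase_of_mem hiL, Finset.card_erase_of_mem hjR, hcard])
      (by rw [Finset.card_erase_of_mem hjR, hm]; rfl)
    refine ⟨insert (i, j) A, hA.insert hij (fun q hq hqj => ?_) (fun q hq => ?_), ?_, ?_⟩
    · obtain ⟨hqi, hqL⟩ := Finset.mem_erase.mp (hAL ▸ Finset.mem_image_of_mem Prod.fst hq)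
      exact lt_of_le_of_ne (himax _ (Finset.mem_filter.mpr ⟨hqL, hqj⟩)) hqi
    · obtain ⟨hqj, hqR⟩ := Finset.mem_erase.mp (hAR ▸ Finset.mem_image_of_mem Prod.snd hq)
      exact lt_of_le_of_ne (hjmin _ hqR) (Ne.symm hqj)
    · rw [Finset.image_insert, hAL, Finset.insert_erase hiL]
    · rw [Finset.image_insert, hAR, Finset.insert_erase hjR]

end IsBallot

/-- a noncrossing partition is determined by its sets of left and right
endpoints; and `L`, `R` of equal size satisfy the ballot-type inequalities iff they arise
as `λ⁺`, `λ⁻` of some noncrossing partition.  (1-based: `i : Fin n` has label `i+1`.) -/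
theorem stmt0 (n : ℕ) :
    (∀ lam mu : NCP n, NCP.lpos lam = NCP.lpos mu → NCP.rpos lam = NCP.rpos mu →
      lam = mu) ∧
    (∀ L R : Finset (Fin n), L.card = R.card →
      ((∀ k : ℕ, 1 ≤ k →
          (R.filter (fun i => (i : ℕ) < k)).card ≤
            (L.filter (fun i => (i : ℕ) + 1 < k)).card) ↔
        ∃ lam : NCP n, NCP.lpos lam = L ∧ NCP.rpos lam = R)) := by
  refine ⟨fun lam mu hL hR => Subtype.ext (lam.2.eq_of_image_eq mu.2 hL hR), fun L R hcard => ?_⟩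
  -- `(i : ℕ)` makes these filters act on `L` and `R` lifted to `Finset ℕ` by a monadic coercion.
  simp only [Finset.bind_def, Finset.pure_def, Finset.sup_singleton_apply, Finset.filter_image,
    Finset.card_image_of_injective, Fin.val_injective]
  change IsBallot L R ↔ _
  constructor
  · intro hbal
    obtain ⟨A, hA, hL, hR⟩ := hbal.exists_isNCP hcard
    exact ⟨⟨A, hA⟩, hL, hR⟩
  · rintro ⟨lam, rfl, rfl⟩
    exact lam.2.isBallot_image
end
end

section
/- Let λ be a noncrossing partition of size n whose connected components (as a graph on {1,…,n}) are C_1,…,C_s, and enumerate each component in increasing order as C_r = {c_{r,1} < c_{r,2} < ⋯ < c_{r,|C_r|}}. Then Q_λ is the product of the disjoint cycles (c_{r,|C_r|} ⋯ c_{r,2} c_{r,1}) for 1 ≤ r ≤ s; equivalently, Q_λ(c_{r,1}) = c_{r,|C_r|} and Q_λ(c_{r,i}) = c_{r,i−1} for all 1 < i ≤ |C_r|. -/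
open scoped Classical

noncomputable section

open MvPolynomial

/-
A noncrossing partition has no shared endpoints, so every point is the right endpoint of at most
one arc and the left endpoint of at most one arc. The arc relation is therefore injective and
functional, its components are chains `c₁ → c₂ → ⋯ → c_m` of arcs with `c₁ < ⋯ < c_m`, and
connected points are joined by a forward chain. Hence if `i < j` lie in the same component,
`j` has an incoming arc `(c, j)` with `i ≤ c`: this `c = Q_λ(j)` is the predecessor of `j`.
If `j` is the minimum of its component it has no incoming arc, and `Q_λ(j)` is the maximum.
-/

namespace Relation

variable {α : Type*} {r : α → α → Prop} {a b : α}

theorem ReflTransGen.total_of_unique (hl : Relator.LeftUnique r) (hr : Relator.RightUnique r)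
    (h : ReflTransGen (fun x y => r x y ∨ r y x) a b) :
    ReflTransGen r a b ∨ ReflTransGen r b a := by
  induction h with
  | refl => exact Or.inl .refl
  | @tail c d _ hcd ih =>
    rcases hcd with hcd | hdc
    · rcases ih with hac | hca
      · exact Or.inl (hac.tail hcd)
      · rcases hca.cases_head with rfl | ⟨e, hce, hea⟩
        · exact Or.inl (.single hcd)
        · exact Or.inr (hr hcd hce ▸ hea)
    · rcases ih with hac | hca
      · rcases hac.cases_tail with rfl | ⟨e, hae, hec⟩
        · exact Or.inr (.single hdc)
        · exact Or.inl (hl hdc hec ▸ hae)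
      · exact Or.inr (.head hdc hca)

theorem ReflTransGen.le_of_le [Preorder α] (hle : ∀ x y, r x y → x ≤ y)
    (h : ReflTransGen r a b) : a ≤ b := by
  simpa [reflTransGen_eq_self] using ReflTransGen.mono hle _ _ h

end Relation

namespace NCP

variable {n : ℕ} {lam : NCP n} {i j : Fin n}

def Arc (lam : NCP n) (i j : Fin n) : Prop := (i, j) ∈ lam.1

theorem Arc.lt (h : lam.Arc i j) : i < j :=
  lam.2.1 _ h

theorem arc_leftUnique (lam : NCP n) : Relator.LeftUnique lam.Arc := by
  intro i i' j h h'
  by_contra hne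
  rcases lt_or_gt_of_ne hne with hlt | hlt
  · exact lam.2.2 _ h _ h' (fun e => hne (congrArg Prod.fst e)) ⟨hlt.le, h'.lt, le_rfl⟩
  · exact lam.2.2 _ h' _ h (fun e => hne (congrArg Prod.fst e).symm) ⟨hlt.le, h.lt, le_rfl⟩

theorem arc_rightUnique (lam : NCP n) : Relator.RightUnique lam.Arc := by
  intro i j j' h h'
  by_contra hne
  rcases lt_or_gt_of_ne hne with hlt | hlt
  · exact lam.2.2 _ h _ h' (fun e => hne (congrArg Prod.snd e)) ⟨le_rfl, h.lt, hlt.le⟩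
  · exact lam.2.2 _ h' _ h (fun e => hne (congrArg Prod.snd e).symm) ⟨le_rfl, h'.lt, hlt.le⟩

theorem mem_component_of_arc (h : lam.Arc i j) : i ∈ lam.component j :=
  Finset.mem_filter.mpr ⟨Finset.mem_univ _, .single (Or.inr h)⟩

theorem exists_arc_ge_of_mem_component (hi : i ∈ lam.component j) (hij : i < j) :
    ∃ c, lam.Arc c j ∧ i ≤ c := by
  have hconn : Relation.ReflTransGen _ j i := (Finset.mem_filter.mp hi).2
  rcases hconn.total_of_unique lam.arc_leftUnique lam.arc_rightUnique with hji | hij_chain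
  · exact absurd (hji.le_of_le fun _ _ h => h.lt.le) hij.not_ge
  · rcases hij_chain.cases_tail with rfl | ⟨c, hic, hcj⟩
    · exact (lt_irrefl _ hij).elim
    · exact ⟨c, hcj, hic.le_of_le fun _ _ h => h.lt.le⟩

theorem arc_qfun (h : ∃ i, lam.Arc i j) : lam.Arc (lam.Qfun j) j := by
  unfold Qfun
  exact (dif_pos h).symm ▸ h.choose_spec

theorem qfun_of_not_exists_arc (h : ¬∃ i, lam.Arc i j) : lam.Qfun j = lam.compMax j :=
  dif_neg h

end NCP

/-- the disjoint cycle decomposition of `Q_λ`: `Q_λ` sends the minimum of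
each connected component to its maximum and every other element `j` of a component to its
predecessor in the component (the largest element of the component smaller than `j`). -/
theorem stmt1 (n : ℕ) (lam : NCP n) (Q : Equiv.Perm (Fin n)) (hQ : NCP.IsQ lam Q) :
    ∀ j : Fin n,
      ((∀ i ∈ NCP.component lam j, j ≤ i) →
        Q j = (NCP.component lam j).max' ⟨j, NCP.mem_component_self lam j⟩) ∧
      ((∃ i ∈ NCP.component lam j, i < j) →
        Q j ∈ NCP.component lam j ∧ Q j < j ∧
          ∀ i ∈ NCP.component lam j, i < j → i ≤ Q j) := by
  intro j
  constructor
  · intro hmin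
    have hno_arc : ¬∃ i, lam.Arc i j := fun ⟨i, hi⟩ =>
      (hmin i (NCP.mem_component_of_arc hi)).not_gt hi.lt
    rw [hQ j, NCP.qfun_of_not_exists_arc hno_arc, NCP.compMax]
  · rintro ⟨i, hi, hij⟩
    obtain ⟨c, hcj, -⟩ := NCP.exists_arc_ge_of_mem_component hi hij
    have hQj : lam.Arc (Q j) j := hQ j ▸ NCP.arc_qfun ⟨c, hcj⟩
    refine ⟨NCP.mem_component_of_arc hQj, hQj.lt, fun k hk hkj => ?_⟩
    obtain ⟨c', hc'j, hkc'⟩ := NCP.exists_arc_ge_of_mem_component hk hkj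
    exact NCP.arc_leftUnique lam hc'j hQj ▸ hkc'
end
end

section
/- For every noncrossing partition λ of size n, Q_λ ∈ C_λ; that is, E_val(Q_λ) = {1,…,n} ∖ λ⁺ and E_pos(Q_λ) = {1,…,n} ∖ λ⁻. -/
/-! `Q_λ` sends a right endpoint `j` to its left partner, which is smaller than `j`, and any
other `j` to the maximum of its block, which is at least `j`; so `E_pos(Q_λ)` is the complement
of `λ⁻`. Since an arc is determined by its right endpoint, `Q_λ` carries `λ⁻` onto `λ⁺`, and
being a bijection it carries the complement of `λ⁻` onto the complement of `λ⁺`. -/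

open scoped Classical

noncomputable section

open MvPolynomial

namespace NCP

variable {n : ℕ}

theorem fst_eq_of_mem_of_mem {A : Finset (Fin n × Fin n)} (hA : IsNCP n A) {i i' j : Fin n}
    (h : (i, j) ∈ A) (h' : (i', j) ∈ A) : i = i' := by
  by_contra hne
  rcases lt_or_gt_of_ne hne with hlt | hlt
  · exact hA.2 _ h _ h' (by simpa using hne) ⟨hlt.le, hA.1 _ h', le_rfl⟩
  · exact hA.2 _ h' _ h (by simpa using Ne.symm hne) ⟨hlt.le, hA.1 _ h, le_rfl⟩

theorem mem_rpos_iff (lam : NCP n) (j : Fin n) : j ∈ rpos lam ↔ ∃ i, (i, j) ∈ lam.1 := by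
  simp [rpos]

theorem Qfun_mem_of_mem_rpos {lam : NCP n} {j : Fin n} (hj : j ∈ rpos lam) :
    (Qfun lam j, j) ∈ lam.1 := by
  have h := (mem_rpos_iff lam j).mp hj
  rw [Qfun, dif_pos h]
  exact h.choose_spec

theorem le_Qfun_iff (lam : NCP n) (j : Fin n) : j ≤ Qfun lam j ↔ j ∉ rpos lam := by
  constructor
  · intro hle hj
    exact (lam.2.1 _ (Qfun_mem_of_mem_rpos hj)).not_ge hle
  · intro hj
    rw [Qfun, dif_neg (mt (mem_rpos_iff lam j).mpr hj)]
    exact (component lam j).le_max' j (mem_component_self lam j)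

theorem image_Qfun_rpos (lam : NCP n) : (rpos lam).image (Qfun lam) = lpos lam := by
  ext i
  simp only [Finset.mem_image, lpos]
  constructor
  · rintro ⟨j, hj, rfl⟩
    exact ⟨_, Qfun_mem_of_mem_rpos hj, rfl⟩
  · rintro ⟨⟨i, j⟩, hij, rfl⟩
    have hj : j ∈ rpos lam := (mem_rpos_iff lam j).mpr ⟨i, hij⟩
    exact ⟨j, hj, fst_eq_of_mem_of_mem lam.2 (Qfun_mem_of_mem_rpos hj) hij⟩

theorem excPos_eq_compl_rpos {lam : NCP n} {Q : Equiv.Perm (Fin n)} (hQ : IsQ lam Q) :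
    ExcPos Q = Finset.univ \ rpos lam := by
  ext j
  simp [ExcPos, hQ j, le_Qfun_iff]

end NCP

theorem excVal_eq_compl_image {n : ℕ} (w : Equiv.Perm (Fin n)) (s : Finset (Fin n))
    (hs : ExcPos w = Finset.univ \ s) : ExcVal w = Finset.univ \ s.image w := by
  rw [ExcVal, hs, Finset.image_sdiff _ _ w.injective,
    Finset.image_univ_of_surjective w.surjective]

/-- `Q_λ ∈ C_λ`, i.e. `E_val(Q_λ) = {1,…,n} ∖ λ⁺` and
`E_pos(Q_λ) = {1,…,n} ∖ λ⁻`. -/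
theorem stmt4 (n : ℕ) (lam : NCP n) (Q : Equiv.Perm (Fin n)) (hQ : NCP.IsQ lam Q) :
    ExcVal Q = Finset.univ \ NCP.lpos lam ∧ ExcPos Q = Finset.univ \ NCP.rpos lam := by
  have hpos := NCP.excPos_eq_compl_rpos hQ
  have hQfun : ⇑Q = NCP.Qfun lam := funext hQ
  refine ⟨?_, hpos⟩
  rw [excVal_eq_compl_image Q _ hpos, hQfun, NCP.image_Qfun_rpos]
end
end

section
/- Let λ be a noncrossing partition of size n ≥ 0 and let w ∈ C_λ. Then for all 1 ≤ k ≤ n: |{i : k < i ≤ n and w(i) < k}| = |λ⁺ ∩ {1,…,k−1}| − |λ⁻ ∩ {1,…,k}|, and |{i : 1 ≤ i ≤ k and w(i) > k}| = |λ⁺ ∩ {1,…,k}| − |λ⁻ ∩ {1,…,k}|. -/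
open scoped Classical

noncomputable section

open MvPolynomial

/-!
Since `E_pos(w) = [n] ∖ λ⁻` and `E_val(w) = [n] ∖ λ⁺`, exactly `k - |λ⁻ ∩ [k]|` of the positions
`≤ k` are weak excedances, and exactly `k - |λ⁺ ∩ [k]|` weak excedances have value `≤ k`.
A weak excedance at a position `≤ k` either has value `≤ k` or jumps over `k`; this is the second
identity. For the first, split the `k - 1` positions `i` with `w(i) < k` into those beyond `k`,
the weak excedances, and the positions `i ≤ k` with `w(i) < i`; the latter are the
`|λ⁻ ∩ [k]|` positions `≤ k` that are not weak excedances.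
-/

open Finset

/-- Writing `(a : ℕ)` in a filter over `s : Finset (Fin n)` makes Lean lift `s` itself to
`Finset ℕ` through the `Finset` monad; the lemmas below write `a.val` to avoid this. -/
theorem Fin.bind_pure_val_eq_map {n : ℕ} (s : Finset (Fin n)) :
    (s >>= fun a => pure (a : ℕ)) = s.map Fin.valEmbedding := by
  ext; simp

theorem Finset.card_filter_eq_add_of_iff {α : Type*} [Fintype α] {p q r : α → Prop}
    [DecidablePred p] [DecidablePred q] [DecidablePred r]
    (hpqr : ∀ x, p x ↔ q x ∨ r x) (hqr : ∀ x, q x → ¬r x) :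
    #{x | p x} = #{x | q x} + #{x | r x} := by
  rw [← card_union_of_disjoint (disjoint_filter.2 fun x _ => hqr x), ← filter_or]
  exact congrArg card (filter_congr fun x _ => hpqr x)

theorem Fin.card_sdiff_filter_val_lt_add {n m : ℕ} (s : Finset (Fin n)) (hm : m ≤ n) :
    #{a ∈ univ \ s | a.val < m} + #{a ∈ s | a.val < m} = m := by
  rw [← card_union_of_disjoint (disjoint_filter_filter sdiff_disjoint), ← filter_union,
    sdiff_union_of_subset (subset_univ s), Fin.card_filter_val_lt, min_eq_right hm]

theorem Equiv.Perm.card_filter_val_apply_lt {n m : ℕ} (w : Equiv.Perm (Fin n)) (hm : m ≤ n) :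
    #{i | (w i).val < m} = m := by
  rw [card_equiv w (t := {j | j.val < m}) fun i => by simp, Fin.card_filter_val_lt,
    min_eq_right hm]

theorem card_excPos_filter_val_lt {n m : ℕ} (w : Equiv.Perm (Fin n)) :
    #{i ∈ ExcPos w | i.val < m} = #{i | i ≤ w i ∧ i.val < m} := by
  rw [ExcPos, filter_filter]

theorem card_excVal_filter_val_lt {n m : ℕ} (w : Equiv.Perm (Fin n)) :
    #{v ∈ ExcVal w | v.val < m} = #{i | i ≤ w i ∧ (w i).val < m} := by
  rw [ExcVal, ExcPos, filter_image, filter_filter, card_image_of_injective _ w.injective]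

theorem card_le_apply_and_val_lt_add {n m : ℕ} {w : Equiv.Perm (Fin n)} {s : Finset (Fin n)}
    (hs : ExcPos w = univ \ s) (hm : m ≤ n) :
    #{i | i ≤ w i ∧ i.val < m} + #{a ∈ s | a.val < m} = m := by
  rw [← card_excPos_filter_val_lt, hs, Fin.card_sdiff_filter_val_lt_add s hm]

theorem card_le_apply_and_apply_val_lt_add {n m : ℕ} {w : Equiv.Perm (Fin n)}
    {s : Finset (Fin n)} (hs : ExcVal w = univ \ s) (hm : m ≤ n) :
    #{i | i ≤ w i ∧ (w i).val < m} + #{a ∈ s | a.val < m} = m := by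
  rw [← card_excVal_filter_val_lt, hs, Fin.card_sdiff_filter_val_lt_add s hm]

namespace NCP

variable {n k : ℕ} {lam : NCP n} {w : Equiv.Perm (Fin n)}

theorem card_val_lt_and_le_apply (hw : w ∈ lam.Cset) (hk : k ≤ n) :
    (#{i | i.val < k ∧ k ≤ (w i).val} : ℤ) =
      #{a ∈ lam.lpos | a.val < k} - #{a ∈ lam.rpos | a.val < k} := by
  have hpos := card_le_apply_and_val_lt_add hw.2 hk
  have hval := card_le_apply_and_apply_val_lt_add hw.1 hk
  have hsplit : #{i | i ≤ w i ∧ i.val < k} =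
      #{i | i.val < k ∧ k ≤ (w i).val} + #{i | i ≤ w i ∧ (w i).val < k} :=
    card_filter_eq_add_of_iff (fun i => by omega) (fun i => by omega)
  omega

theorem card_succ_le_and_apply_val_lt (hw : w ∈ lam.Cset) (hk : k + 1 ≤ n) :
    (#{i | k + 1 ≤ i.val ∧ (w i).val < k} : ℤ) =
      #{a ∈ lam.lpos | a.val < k} - #{a ∈ lam.rpos | a.val < k + 1} := by
  have hpos := card_le_apply_and_val_lt_add hw.2 hk
  have hval := card_le_apply_and_apply_val_lt_add hw.1 (k.le_succ.trans hk)
  have hperm := w.card_filter_val_apply_lt (k.le_succ.trans hk)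
  have huniv : #{i : Fin n | i.val < k + 1} = k + 1 := by
    rw [Fin.card_filter_val_lt, min_eq_right hk]
  have hsplit_val : #{i | (w i).val < k} =
      #{i | k + 1 ≤ i.val ∧ (w i).val < k} + #{i | i.val < k + 1 ∧ (w i).val < k} :=
    card_filter_eq_add_of_iff (fun i => by omega) (fun i => by omega)
  have hsplit_below : #{i | i.val < k + 1 ∧ (w i).val < k} =
      #{i | i ≤ w i ∧ (w i).val < k} + #{i : Fin n | i.val < k + 1 ∧ w i < i} :=
    card_filter_eq_add_of_iff (fun i => by omega) (fun i => by omega)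
  have hsplit_pos : #{i : Fin n | i.val < k + 1} =
      #{i | i ≤ w i ∧ i.val < k + 1} + #{i : Fin n | i.val < k + 1 ∧ w i < i} :=
    card_filter_eq_add_of_iff (fun i => by omega) (fun i => by omega)
  omega

end NCP

/-- for `w ∈ C_λ` and `1 ≤ k ≤ n`,
`|{i : k < i ≤ n, w(i) < k}| = |λ⁺ ∩ {1,…,k−1}| − |λ⁻ ∩ {1,…,k}|` and
`|{i : 1 ≤ i ≤ k, w(i) > k}| = |λ⁺ ∩ {1,…,k}| − |λ⁻ ∩ {1,…,k}|` (in `ℤ`;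
1-based labels: position `i : Fin n` has label `(i : ℕ) + 1`). -/
theorem stmt5 (n : ℕ) (lam : NCP n) (w : Equiv.Perm (Fin n)) (hw : w ∈ NCP.Cset lam) :
    ∀ k : ℕ, 1 ≤ k → k ≤ n →
      (((Finset.univ.filter
            (fun i : Fin n => k ≤ (i : ℕ) ∧ ((w i : ℕ) + 1 < k))).card : ℤ) =
        (((NCP.lpos lam).filter (fun a => (a : ℕ) + 1 < k)).card : ℤ) -
          (((NCP.rpos lam).filter (fun a => (a : ℕ) < k)).card : ℤ)) ∧
      (((Finset.univ.filter
            (fun i : Fin n => (i : ℕ) < k ∧ k ≤ (w i : ℕ))).card : ℤ) =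
        (((NCP.lpos lam).filter (fun a => (a : ℕ) < k)).card : ℤ) -
          (((NCP.rpos lam).filter (fun a => (a : ℕ) < k)).card : ℤ)) := by
  intro k hk hkn
  obtain ⟨m, rfl⟩ : ∃ m, k = m + 1 := ⟨k - 1, by omega⟩
  simp only [Fin.bind_pure_val_eq_map, filter_map, card_map, Function.comp_def,
    Nat.add_lt_add_iff_right]
  exact ⟨NCP.card_succ_le_and_apply_val_lt hw hkn, NCP.card_val_lt_and_le_apply hw hkn⟩
end
end
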